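/- Let m be a natural number, a_k = a_{m-1,k} the coefficients of Π_{r=1}^{m-1}(1+x/r), and for complex s set v_k = (k+1)a_k/((k+s)a_{k-1}). If s = σ + it with 0 < σ < 1 and |t| < (1/2)√(log m), then |(v_k + 1)(1 + 1/v_{k+1})| ≥ 4 for all 1 ≤ k ≤ m-2. -/

import Mathlib

/-!
Put `X = Re v_k`, `Y = Re (1 / v_{k+1})` and `u = k + σ`; since `‖z + 1‖ ≥ 1 + Re z`, it suffices
to show `(1 + X)(1 + Y) ≥ 4`. Newton's inequality `(k + 1) a_{k-1} a_{k+1} ≤ k a_k²` gives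
`XY ≥ (k + 1)² u (u + 1) / (k (k + 2) (u² + t²))`. If `t² ≤ k` this is at least `1`, and
AM–GM finishes. If `t² > k`, then `4k < 4t² < log m ≤ h_{m-1} = a_1`; since `∑ 1/r² ≤ 2`, the
bound `e_1 e_{i+1} ≤ (i + 2) e_{i+2} + (∑ x²) e_i` gives inductively `(h_{m-1} - 1) a_{k-1} ≤ k a_k`
for such small `k`, and this forces `X + XY ≥ 3`.
-/

namespace Multiset

section CommSemiring

variable {R : Type*} [CommSemiring R]

theorem esymm_zero (s : Multiset R) : s.esymm 0 = 1 := by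
  simp [esymm]

theorem esymm_one (s : Multiset R) : s.esymm 1 = s.sum := by
  simp [esymm, powersetCard_one, map_map]

theorem esymm_cons_succ (x : R) (s : Multiset R) (k : ℕ) :
    (x ::ₘ s).esymm (k + 1) = s.esymm (k + 1) + x * s.esymm k := by
  simp [esymm, powersetCard_cons, map_map, prod_cons, sum_map_mul_left]

end CommSemiring

variable {s : Multiset ℝ}

theorem esymm_nonneg (hs : ∀ x ∈ s, 0 ≤ x) (k : ℕ) : 0 ≤ s.esymm k :=
  sum_nonneg fun _ ht => by
    obtain ⟨t, hts, rfl⟩ := mem_map.1 ht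
    exact prod_nonneg fun x hx => hs x (mem_of_le (mem_powersetCard.1 hts).1 hx)

theorem esymm_pos (hs : ∀ x ∈ s, 0 < x) {k : ℕ} (hk : k ≤ card s) : 0 < s.esymm k := by
  induction s using Multiset.induction generalizing k with
  | empty => simp_all [esymm_zero]
  | cons x s ih =>
    rcases k with _ | k
    · simp [esymm_zero]
    have hs' : ∀ y ∈ s, 0 < y := fun y hy => hs y (mem_cons_of_mem hy)
    have hx := hs x (mem_cons_self x s)
    have hk := ih hs' (k := k) (by simpa using hk)
    have hk1 := esymm_nonneg (fun y hy => (hs' y hy).le) (k + 1)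
    rw [esymm_cons_succ]
    positivity

theorem esymm_succ_eq_zero (hs : ∀ x ∈ s, 0 ≤ x) {k : ℕ} (h : s.esymm k = 0) :
    s.esymm (k + 1) = 0 := by
  induction s using Multiset.induction generalizing k with
  | empty => simp [esymm, powersetCard_zero_right]
  | cons x s ih =>
    have hs' : ∀ y ∈ s, 0 ≤ y := fun y hy => hs y (mem_cons_of_mem hy)
    have hx := hs x (mem_cons_self x s)
    rcases k with _ | k
    · simp [esymm_zero] at h
    rw [esymm_cons_succ] at h ⊢
    have h0 : s.esymm (k + 1) = 0 := by
      nlinarith [esymm_nonneg hs' (k + 1), mul_nonneg hx (esymm_nonneg hs' k)]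
    rw [ih hs' h0, h0, mul_zero, add_zero]

/-- Expanding `e_1 e_{k+1}` gives `(k + 2) e_{k+2} + ∑ᵢ xᵢ² e_k(s - {xᵢ})`. -/
theorem sum_mul_esymm_succ_le (hs : ∀ x ∈ s, 0 ≤ x) (k : ℕ) :
    s.sum * s.esymm (k + 1) ≤ (k + 2) * s.esymm (k + 2) + (s.map (· ^ 2)).sum * s.esymm k := by
  induction s using Multiset.induction generalizing k with
  | empty => simp [esymm, powersetCard_zero_right]
  | cons x s ih =>
    have hs' : ∀ y ∈ s, 0 ≤ y := fun y hy => hs y (mem_cons_of_mem hy)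
    have hx := hs x (mem_cons_self x s)
    simp only [sum_cons, map_cons]
    rcases k with _ | j
    · have h0 := ih hs' 0
      simp only [esymm_cons_succ, esymm_zero, zero_add, Nat.reduceAdd, esymm_one, sum_cons]
        at h0 ⊢
      push_cast at h0 ⊢
      nlinarith
    · have hj := ih hs' j
      have hj1 := ih hs' (j + 1)
      simp only [esymm_cons_succ, add_assoc, Nat.reduceAdd] at hj1 ⊢
      push_cast at hj hj1 ⊢
      nlinarith [mul_le_mul_of_nonneg_left hj hx,
        mul_nonneg (pow_nonneg hx 3) (esymm_nonneg hs' j)]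

theorem esymm_mul_esymm_add_three_le (hs : ∀ x ∈ s, 0 ≤ x) {j : ℕ}
    (hj : ((j : ℝ) + 2) * s.esymm j * s.esymm (j + 2) ≤ (j + 1) * s.esymm (j + 1) ^ 2)
    (hj1 : ((j : ℝ) + 3) * s.esymm (j + 1) * s.esymm (j + 3) ≤ (j + 2) * s.esymm (j + 2) ^ 2) :
    ((j : ℝ) + 3) * (s.esymm j * s.esymm (j + 3)) ≤
      (j + 1) * (s.esymm (j + 1) * s.esymm (j + 2)) := by
  rcases (mul_nonneg (esymm_nonneg hs (j + 1)) (esymm_nonneg hs (j + 2))).eq_or_lt with hz | hpos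
  · have h3 : s.esymm (j + 3) = 0 := by
      rcases mul_eq_zero.1 hz.symm with h | h
      · exact esymm_succ_eq_zero hs (esymm_succ_eq_zero hs h)
      · exact esymm_succ_eq_zero hs h
    rw [h3, mul_zero, mul_zero]
    exact mul_nonneg (by positivity) hz.le
  · refine le_of_mul_le_mul_left ?_ (mul_pos (by positivity : (0 : ℝ) < j + 2) hpos)
    have h13 := mul_nonneg (mul_nonneg (by positivity : (0 : ℝ) ≤ j + 3) (esymm_nonneg hs (j + 1)))
      (esymm_nonneg hs (j + 3))
    nlinarith [mul_le_mul hj hj1 h13 (by positivity)]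

/-- Newton's inequality in the form "`k e_k / e_{k-1}` is decreasing". -/
theorem esymm_newton (hs : ∀ x ∈ s, 0 ≤ x) (k : ℕ) :
    (k + 2) * s.esymm k * s.esymm (k + 2) ≤ (k + 1) * s.esymm (k + 1) ^ 2 := by
  induction s using Multiset.induction generalizing k with
  | empty => simp [esymm, powersetCard_zero_right]
  | cons x s ih =>
    have hs' : ∀ y ∈ s, 0 ≤ y := fun y hy => hs y (mem_cons_of_mem hy)
    have hx := hs x (mem_cons_self x s)
    rcases k with _ | j
    · have h0 := ih hs' 0
      simp only [esymm_cons_succ, esymm_zero, zero_add, Nat.reduceAdd] at h0 ⊢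
      push_cast at h0 ⊢
      nlinarith [esymm_nonneg hs' 1]
    · have hj := ih hs' j
      have hj1 := ih hs' (j + 1)
      simp only [esymm_cons_succ, add_assoc, Nat.reduceAdd] at hj1 ⊢
      push_cast at hj hj1 ⊢
      have hsq : ((j : ℝ) + 3) * (s.esymm j * s.esymm (j + 2)) ≤
          (j + 2) * s.esymm (j + 1) ^ 2 := by
        nlinarith [esymm_nonneg hs' j, esymm_nonneg hs' (j + 2)]
      have hcross := esymm_mul_esymm_add_three_le hs' hj (by linarith)
      nlinarith [mul_le_mul_of_nonneg_left hcross hx,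
        mul_le_mul_of_nonneg_left hsq (mul_nonneg hx hx)]

theorem sub_one_mul_esymm_le_of_sum_sq_mul_le (hs : ∀ x ∈ s, 0 ≤ x) {i : ℕ}
    (hi : (s.map (· ^ 2)).sum * i ≤ s.sum - 1) :
    (s.sum - 1) * s.esymm i ≤ (i + 1) * s.esymm (i + 1) := by
  have hQ : 0 ≤ (s.map (· ^ 2)).sum := sum_nonneg fun _ hx => by
    obtain ⟨x, -, rfl⟩ := mem_map.1 hx
    positivity
  induction i with
  | zero => simp [esymm_zero, esymm_one]
  | succ i ih =>
    push_cast at hi ⊢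
    have hprev := ih (by nlinarith)
    have hstep := sum_mul_esymm_succ_le hs i
    have h0 := esymm_nonneg hs i
    have h1 := esymm_nonneg hs (i + 1)
    have hQe : (s.map (· ^ 2)).sum * s.esymm i ≤ s.esymm (i + 1) := by
      nlinarith
    nlinarith

end Multiset

theorem four_le_one_add_mul_one_add_of_newton {k σ t H p q r : ℝ} (hk : 1 ≤ k) (hσ0 : 0 ≤ σ)
    (hσ1 : σ ≤ 1) (hp : 0 < p) (hq : 0 < q) (hr : 0 < r)
    (hnewton : (k + 1) * p * r ≤ k * q ^ 2) (hH : 4 * t ^ 2 < H)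
    (hratio : k < t ^ 2 → (H - 1) * p ≤ k * q) :
    4 ≤ (1 + (k + 1) * q / p * (k + σ) / ((k + σ) ^ 2 + t ^ 2)) *
      (1 + q / ((k + 1 + 1) * r) * (k + 1 + σ)) := by
  set u := k + σ
  have hku : k ≤ u := by linarith
  have hu : 0 < u := by linarith
  set D := u ^ 2 + t ^ 2
  set X := (k + 1) * q / p * u / D
  rw [show k + 1 + σ = u + 1 by ring, show k + 1 + 1 = k + 2 by ring]
  set Y := q / ((k + 2) * r) * (u + 1)
  have hD : 0 < D := by positivity
  have hX : 0 < X := by positivity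
  have hY : 0 < Y := by positivity
  have hXY : (k + 1) ^ 2 * (u * (u + 1)) ≤ k * (k + 2) * D * (X * Y) := by
    have hq2 : k + 1 ≤ k * q ^ 2 / (p * r) := by
      rw [le_div_iff₀ (by positivity)]; linarith
    have : k * (k + 2) * D * (X * Y) = (k + 1) * (u * (u + 1)) * (k * q ^ 2 / (p * r)) := by
      simp only [X, Y]; field_simp
    rw [this]
    nlinarith [mul_le_mul_of_nonneg_left hq2 (by positivity : (0 : ℝ) ≤ (k + 1) * (u * (u + 1)))]
  rcases le_or_gt (t ^ 2) k with ht | ht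
  · have hpoly : k * (k + 2) * D ≤ (k + 1) ^ 2 * (u * (u + 1)) := by
      simp only [D]
      nlinarith [mul_le_mul_of_nonneg_left ht (by positivity : (0 : ℝ) ≤ k * (k + 2)),
        mul_le_mul_of_nonneg_left hku (by positivity : (0 : ℝ) ≤ (k + 1) ^ 2)]
    have h1 : 1 ≤ X * Y :=
      le_of_mul_le_mul_left (by linarith : k * (k + 2) * D * 1 ≤ k * (k + 2) * D * (X * Y))
        (by positivity)
    nlinarith [sq_nonneg (X - Y)]
  · have hH1 : 0 ≤ H - 1 := by linarith
    have hHX : (H - 1) * (u + 1) ≤ D * X := by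
      have hDX : D * X = (k + 1) * u * q / p := by simp only [X]; field_simp
      rw [hDX, le_div_iff₀ hp]
      refine le_of_mul_le_mul_left ?_ (by positivity : 0 < k)
      nlinarith [mul_le_mul_of_nonneg_left (hratio ht) (by positivity : (0 : ℝ) ≤ (k + 1) * u),
        mul_le_mul_of_nonneg_left hku (mul_nonneg hH1 hp.le)]
    have hDXY : u * (u + 1) ≤ D * (X * Y) := by
      refine le_of_mul_le_mul_left ?_ (by positivity : 0 < k * (k + 2))
      nlinarith [mul_pos hu (by linarith : 0 < u + 1)]
    have hpoly : 3 * D ≤ (H - 1) * (u + 1) + u * (u + 1) := by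
      simp only [D]
      nlinarith [mul_le_mul_of_nonneg_left hH.le hu.le]
    have h3 : 3 ≤ X + X * Y :=
      le_of_mul_le_mul_left (by linarith : D * 3 ≤ D * (X + X * Y)) hD
    nlinarith

namespace Complex

theorem re_add_one_mul_div (κ A P σ t : ℝ) :
    (((κ : ℂ) + 1) * A / ((κ + (σ + t * I)) * P)).re =
      (κ + 1) * A / P * (κ + σ) / ((κ + σ) ^ 2 + t ^ 2) := by
  have : ((κ : ℂ) + 1) * A / ((κ + (σ + t * I)) * P) =
      (((κ + 1) * A / P : ℝ) : ℂ) * (((κ + σ : ℝ) : ℂ) + t * I)⁻¹ := by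
    rw [mul_comm _ (P : ℂ), ← div_div]; push_cast; ring
  rw [this, re_ofReal_mul, inv_re, normSq_add_mul_I]
  simp [mul_div_assoc]

theorem re_one_div_add_one_mul_div (κ A P σ t : ℝ) :
    (1 / (((κ : ℂ) + 1) * A / ((κ + (σ + t * I)) * P))).re = P / ((κ + 1) * A) * (κ + σ) := by
  have : 1 / (((κ : ℂ) + 1) * A / ((κ + (σ + t * I)) * P)) =
      ((P / ((κ + 1) * A) : ℝ) : ℂ) * (((κ + σ : ℝ) : ℂ) + t * I) := by
    rw [one_div_div]; push_cast; ring
  rw [this, re_ofReal_mul]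
  simp

theorem one_add_re_mul_one_add_re_le_norm (z w : ℂ) (hw : 0 ≤ 1 + w.re) :
    (1 + z.re) * (1 + w.re) ≤ ‖(z + 1) * (1 + w)‖ := by
  rw [norm_mul, add_comm z]
  refine mul_le_mul ?_ ?_ hw (norm_nonneg _) <;>
    simpa using re_le_norm (1 + _)

end Complex

/-- The multiset `{1, 1/2, …, 1/n}`, whose elementary symmetric functions are the coefficients
of `∏_{r=1}^{n} (1 + x/r)`. -/
noncomputable def harmonicTerms (n : ℕ) : Multiset ℝ :=
  (Finset.Icc 1 n).val.map fun r : ℕ => 1 / (r : ℝ)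

theorem harmonicTerms_pos {n : ℕ} : ∀ x ∈ harmonicTerms n, 0 < x := by
  intro x hx
  obtain ⟨r, hr, rfl⟩ := Multiset.mem_map.1 hx
  have : 1 ≤ r := (Finset.mem_Icc.1 hr).1
  positivity

theorem card_harmonicTerms (n : ℕ) : Multiset.card (harmonicTerms n) = n := by
  simp [harmonicTerms]

theorem log_succ_le_sum_harmonicTerms (n : ℕ) : Real.log (n + 1) ≤ (harmonicTerms n).sum := by
  simpa [harmonicTerms, harmonic_eq_sum_Icc, Finset.sum_map_val] using log_add_one_le_harmonic n

theorem sum_sq_harmonicTerms_le_two (n : ℕ) : ((harmonicTerms n).map (· ^ 2)).sum ≤ 2 := by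
  have hIcc : Finset.Icc 1 n = Finset.Ioo 0 (n + 1) := by ext; simp; omega
  simpa [harmonicTerms, Multiset.map_map, Finset.sum_map_val, hIcc] using
    sum_Ioo_inv_sq_le (α := ℝ) 0 (n + 1)

theorem four_mul_sq_lt_sum_harmonicTerms {m : ℕ} (hm : 1 ≤ m) {t : ℝ}
    (ht : |t| < 1 / 2 * √(Real.log m)) : 4 * t ^ 2 < (harmonicTerms (m - 1)).sum := by
  have hlog := log_succ_le_sum_harmonicTerms (m - 1)
  rw [← Nat.cast_add_one, Nat.sub_add_cancel hm] at hlog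
  have hsqrt := Real.sq_sqrt (Real.log_nonneg (show (1 : ℝ) ≤ m by exact_mod_cast hm))
  nlinarith [abs_nonneg t, sq_abs t]

open Complex

theorem stmt12 (m : ℕ) (a : ℕ → ℝ)
    (ha : ∀ k : ℕ, a k = ∑ T ∈ (Finset.Icc 1 (m - 1)).powersetCard k,
      ∏ r ∈ T, (1 : ℝ) / r)
    (σ t : ℝ) (hσ0 : 0 < σ) (hσ1 : σ < 1)
    (ht : |t| < (1 / 2) * Real.sqrt (Real.log m))
    (s : ℂ) (hs : s = σ + t * Complex.I)
    (v : ℕ → ℂ)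
    (hv : ∀ k : ℕ, v k = ((k : ℂ) + 1) * (a k : ℂ) / (((k : ℂ) + s) * (a (k - 1) : ℂ))) :
    ∀ k : ℕ, 1 ≤ k → k ≤ m - 2 →
      4 ≤ ‖(v k + 1) * (1 + 1 / v (k + 1))‖ := by
  intro k hk1 hk2
  have ha' : ∀ i, a i = (harmonicTerms (m - 1)).esymm i := fun i => by
    rw [ha, harmonicTerms, Finset.esymm_map_val]
  have hnonneg : ∀ x ∈ harmonicTerms (m - 1), 0 ≤ x := fun x hx => (harmonicTerms_pos x hx).le
  have hpos : ∀ i ≤ m - 1, 0 < a i := fun i hi => (ha' i).symm ▸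
    Multiset.esymm_pos harmonicTerms_pos (by rwa [card_harmonicTerms])
  have hH := four_mul_sq_lt_sum_harmonicTerms (by omega) ht
  obtain ⟨j, rfl⟩ : ∃ j, k = j + 1 := ⟨k - 1, by omega⟩
  rw [hv, hv, hs, Nat.add_sub_cancel, Nat.add_sub_cancel, ← ofReal_natCast, ← ofReal_natCast]
  refine le_trans ?_ (one_add_re_mul_one_add_re_le_norm _ _ ?_) <;>
    rw [re_one_div_add_one_mul_div]
  · rw [re_add_one_mul_div, Nat.cast_succ (j + 1)]
    refine four_le_one_add_mul_one_add_of_newton (by simp) hσ0.le hσ1.le (hpos j (by omega))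
      (hpos (j + 1) (by omega)) (hpos (j + 2) (by omega)) ?_ hH fun htj => ?_
    · simpa only [ha', Nat.cast_succ, add_assoc, one_add_one_eq_two] using
        Multiset.esymm_newton hnonneg j
    · simp only [ha', Nat.cast_succ] at htj ⊢
      refine Multiset.sub_one_mul_esymm_le_of_sum_sq_mul_le hnonneg ?_
      nlinarith [sum_sq_harmonicTerms_le_two (m - 1), j.cast_nonneg (α := ℝ)]
  · have := hpos (j + 1) (by omega)
    have := hpos (j + 2) (by omega)
    positivity
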